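/- Let a_n ∈ {0,1} for all n ≥ n₀, and for L ∈ ℕ define S(L) = ∑_{n=n₀}^{⌊log₄(L/2)⌋} c_n(L) · a_n / L², where (⌊L/2^{2n+1}⌋ − 1)² ≤ c_n(L) ≤ (⌊L/2^{2n+1}⌋ + 1)². Then lim_{L→∞} S(L) = (1/4) ∑_{n=n₀}^∞ a_n / 16^n. -/

import Mathlib

open Filter

/-- `⌊L/k⌋ / L → 1/k`. -/
lemma aux_div_tendsto (k : ℕ) (hk : 0 < k) :
    Tendsto (fun L : ℕ => ((L / k : ℕ) : ℝ) / L) atTop (nhds (1 / (k : ℝ))) := by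
  have hkR : (0:ℝ) < k := by exact_mod_cast hk
  apply tendsto_of_tendsto_of_tendsto_of_le_of_le'
    (g := fun L : ℕ => 1 / (k : ℝ) - 1 / L) (h := fun _ : ℕ => 1 / (k : ℝ))
  · simpa using (tendsto_const_nhds (x := 1 / (k:ℝ))).sub tendsto_one_div_atTop_nhds_zero_nat
  · exact tendsto_const_nhds
  · filter_upwards [eventually_ge_atTop 1] with L hL
    have hLR : (0:ℝ) < L := by exact_mod_cast hL
    have h1 : (L : ℝ) / k - 1 ≤ ((L / k : ℕ) : ℝ) := by
      have : L < (L / k + 1) * k := (Nat.div_lt_iff_lt_mul hk).mp (Nat.lt_succ_self _)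
      have : (L : ℝ) < ((L / k : ℕ) + 1) * k := by exact_mod_cast this
      have := (div_lt_iff₀ hkR).mpr this
      linarith
    have heq : 1 / (k : ℝ) - 1 / L = ((L : ℝ) / k - 1) / L := by
      field_simp
    rw [heq]
    gcongr
  · filter_upwards [eventually_ge_atTop 1] with L hL
    have hLR : (0:ℝ) < L := by exact_mod_cast hL
    rw [div_le_div_iff₀ hLR hkR]
    have : L / k * k ≤ L := Nat.div_mul_le_self L k
    have : ((L / k : ℕ) : ℝ) * k ≤ L := by exact_mod_cast this
    linarith

/-- `(⌊L/k⌋ + ε) / L → 1/k` for any constant `ε`. -/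
lemma aux_div_tendsto' (k : ℕ) (hk : 0 < k) (ε : ℝ) :
    Tendsto (fun L : ℕ => (((L / k : ℕ) : ℝ) + ε) / L) atTop (nhds (1 / (k : ℝ))) := by
  have h1 := aux_div_tendsto k hk
  have h2 : Tendsto (fun L : ℕ => ε * (1 / (L : ℝ))) atTop (nhds (ε * 0)) :=
    tendsto_const_nhds.mul tendsto_one_div_atTop_nhds_zero_nat
  have := h1.add h2
  rw [mul_zero, add_zero] at this
  refine this.congr fun L => ?_
  rw [add_div]
  ring

open Filter in
/-- The limiting density computation: if `a n ∈ {0,1}` for `n ≥ n₀` and `c n L` counts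
the complete `n`-squares in an `L×L` region, with
`(⌊L/2^(2n+1)⌋ − 1)² ≤ c n L ≤ (⌊L/2^(2n+1)⌋ + 1)²`, then
`S(L) = ∑_{n=n₀}^{⌊log₄(L/2)⌋} c n L · a n / L²` converges to
`(1/4) ∑_{n≥n₀} a n / 16^n` as `L → ∞`. -/
theorem stmt10 (n₀ : ℕ) (a : ℕ → ℝ) (ha : ∀ n, n₀ ≤ n → a n = 0 ∨ a n = 1)
    (c : ℕ → ℕ → ℕ)
    (hc : ∀ n L, (L / 2^(2*n+1) - 1)^2 ≤ c n L ∧ c n L ≤ (L / 2^(2*n+1) + 1)^2) :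
    Tendsto
      (fun L : ℕ => ∑ n ∈ Finset.Icc n₀ (Nat.log 4 (L / 2)),
        (c n L : ℝ) * a n / (L : ℝ)^2)
      atTop
      (nhds ((1/4 : ℝ) * ∑' n : ℕ, (if n₀ ≤ n then a n / 16^n else 0))) := by
  classical
  set F : ℕ → ℕ → ℝ := fun L n =>
    if n ∈ Finset.Icc n₀ (Nat.log 4 (L / 2)) then (c n L : ℝ) * a n / (L : ℝ)^2 else 0
    with hF
  set g : ℕ → ℝ := fun n => (1/4 : ℝ) * (if n₀ ≤ n then a n / 16^n else 0) with hg
  have hpow : ∀ n : ℕ, ((2:ℝ) ^ (2*n+1))^2 = 4 * 16^n := by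
    intro n
    rw [← pow_mul, show (2*n+1)*2 = 2 + 4*n by ring, pow_add,
      show (16:ℝ) = 2^4 by norm_num, ← pow_mul]
    norm_num
  -- key: rewrite sum as tsum
  have hsum_eq : ∀ L : ℕ,
      (∑ n ∈ Finset.Icc n₀ (Nat.log 4 (L / 2)), (c n L : ℝ) * a n / (L : ℝ)^2)
        = ∑' n, F L n := by
    intro L
    rw [tsum_eq_sum (s := Finset.Icc n₀ (Nat.log 4 (L / 2)))
          (fun n hn => if_neg hn)]
    exact Finset.sum_congr rfl fun n hn => (if_pos hn).symm
  have htarget : (1/4 : ℝ) * ∑' n : ℕ, (if n₀ ≤ n then a n / 16^n else 0) = ∑' n, g n := by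
    rw [← tsum_mul_left]
  rw [htarget]
  have hconv : Tendsto (fun L : ℕ => ∑' n, F L n) atTop (nhds (∑' n, g n)) := by
    apply tendsto_tsum_of_dominated_convergence (bound := fun n => (1/16 : ℝ)^n)
    · exact summable_geometric_of_lt_one (by norm_num) (by norm_num)
    · -- pointwise convergence
      intro n
      by_cases hn : n₀ ≤ n
      · rcases ha n hn with h0 | h1
        · -- a n = 0
          have : ∀ L, F L n = 0 := fun L => by simp [hF, h0]
          simp only [this, hg, h0, zero_div, if_pos hn, mul_zero]
          exact tendsto_const_nhds
        · -- a n = 1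
          set k : ℕ := 2 ^ (2*n+1) with hk
          have hkpos : 0 < k := Nat.pow_pos (by norm_num)
          have hglim : g n = (1 / (k : ℝ))^2 := by
            simp only [hg, if_pos hn, h1]
            rw [div_pow, one_pow, hk]
            push_cast
            rw [hpow n]
            ring
          rw [hglim]
          -- squeeze c n L / L^2 between ((⌊L/k⌋ ± 1)/L)^2
          have hlow := ((aux_div_tendsto' k hkpos (-1)).pow 2)
          have hup := ((aux_div_tendsto' k hkpos 1).pow 2)
          have hmain : Tendsto (fun L : ℕ => (c n L : ℝ) / (L:ℝ)^2) atTop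
              (nhds ((1 / (k : ℝ))^2)) := by
            apply tendsto_of_tendsto_of_tendsto_of_le_of_le' hlow hup
            · filter_upwards [eventually_ge_atTop k] with L hL
              have hLpos : (0:ℝ) < L := by
                exact_mod_cast lt_of_lt_of_le hkpos hL
              have hm1 : 1 ≤ L / k := (Nat.one_le_div_iff hkpos).mpr hL
              have hcast : (((L / k : ℕ) : ℝ) + (-1)) = ((L / k - 1 : ℕ) : ℝ) := by
                have h := (Nat.cast_sub hm1 : ((L / k - 1 : ℕ) : ℝ) = ((L / k : ℕ) : ℝ) - (1 : ℕ))
                rw [h]; push_cast; ring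
              have hb := (hc n L).1
              have hbR : ((L / k - 1 : ℕ) : ℝ)^2 ≤ (c n L : ℝ) := by
                exact_mod_cast hb
              rw [div_pow, hcast]
              gcongr
            · filter_upwards [eventually_ge_atTop 1] with L hL
              have hLpos : (0:ℝ) < L := by exact_mod_cast hL
              have hb := (hc n L).2
              have hbR : (c n L : ℝ) ≤ (((L / k : ℕ) : ℝ) + 1)^2 := by
                exact_mod_cast hb
              rw [div_pow]
              gcongr
          -- eventually F L n = c n L / L^2
          have hev : ∀ᶠ L : ℕ in atTop, F L n = (c n L : ℝ) / (L:ℝ)^2 := by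
            filter_upwards [eventually_ge_atTop (2 * 4^n)] with L hL
            have h4 : 4^n ≤ L / 2 := (Nat.le_div_iff_mul_le (by norm_num)).mpr
              (by omega)
            have hL2 : L / 2 ≠ 0 := by
              have : 0 < 4^n := Nat.pow_pos (by norm_num)
              omega
            have hlog : n ≤ Nat.log 4 (L / 2) :=
              (Nat.le_log_iff_pow_le (by norm_num) hL2).mpr h4
            simp [hF, Finset.mem_Icc, hn, hlog, h1]
          exact Tendsto.congr' (by filter_upwards [hev] with L h; exact h.symm) hmain
      · -- n < n₀
        have : ∀ L, F L n = 0 := fun L => by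
          simp [hF, Finset.mem_Icc, hn]
        simp only [this, hg, if_neg hn, mul_zero]
        exact tendsto_const_nhds
    · -- domination
      filter_upwards [eventually_ge_atTop 2] with L hL
      intro n
      by_cases hmem0 : n ∈ Finset.Icc n₀ (Nat.log 4 (L / 2))
      · have hmem := hmem0
        rw [Finset.mem_Icc] at hmem
        obtain ⟨hn0, hlog⟩ := hmem
        have hL2 : L / 2 ≠ 0 := by omega
        have h4 : 4^n ≤ L / 2 := by
          calc 4^n ≤ 4 ^ Nat.log 4 (L / 2) := Nat.pow_le_pow_right (by norm_num) hlog
            _ ≤ L / 2 := Nat.pow_log_le_self 4 hL2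
        set k : ℕ := 2 ^ (2*n+1) with hk
        have hkeq : k = 2 * 4^n := by
          rw [hk, pow_succ, pow_mul]
          ring
        have hkL : k ≤ L := by
          have h42 : 4^n * 2 ≤ L := (Nat.le_div_iff_mul_le (by norm_num)).mp h4
          omega
        have hkpos : 0 < k := Nat.pow_pos (by norm_num)
        have hm1 : 1 ≤ L / k := (Nat.one_le_div_iff hkpos).mpr hkL
        have hLpos : (0:ℝ) < L := by
          have : (0:ℕ) < L := by omega
          exact_mod_cast this
        have hkR : (0:ℝ) < k := by exact_mod_cast hkpos
        -- c n L ≤ (m+1)^2 ≤ (2m)^2, m ≤ L/k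
        have hb := (hc n L).2
        have hmk : ((L / k : ℕ) : ℝ) ≤ (L:ℝ) / k := by
          rw [le_div_iff₀ hkR]
          exact_mod_cast Nat.div_mul_le_self L k
        have h2m : (((L / k : ℕ) : ℝ) + 1) ≤ 2 * ((L:ℝ) / k) := by
          have h1m : (1:ℝ) ≤ ((L / k : ℕ) : ℝ) := by exact_mod_cast hm1
          linarith
        have hcb : (c n L : ℝ) ≤ (2 * ((L:ℝ) / k))^2 := by
          have hbR : (c n L : ℝ) ≤ (((L / k : ℕ) : ℝ) + 1)^2 := by exact_mod_cast hb
          refine hbR.trans (pow_le_pow_left₀ (by positivity) h2m 2)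
        have hval : (2 * ((L:ℝ) / k))^2 = (L:ℝ)^2 * (1/16)^n := by
          have : ((k:ℝ))^2 = 4 * 16^n := by
            rw [hk]; push_cast; exact hpow n
          field_simp
          rw [this]
          ring_nf
          rw [← mul_pow]
          norm_num
        have hanorm : |a n| ≤ 1 := by
          rcases ha n hn0 with h | h <;> simp [h]
        have hFval : F L n = (c n L : ℝ) * a n / (L : ℝ)^2 := if_pos hmem0
        rw [hFval, Real.norm_eq_abs, abs_div, abs_mul]
        have hL2abs : |(L:ℝ)^2| = (L:ℝ)^2 := abs_of_pos (by positivity)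
        rw [hL2abs, Nat.abs_cast]
        rw [div_le_iff₀ (by positivity)]
        calc (c n L : ℝ) * |a n| ≤ (c n L : ℝ) * 1 :=
              mul_le_mul_of_nonneg_left hanorm (by positivity)
          _ = (c n L : ℝ) := mul_one _
          _ ≤ (L:ℝ)^2 * (1/16)^n := by rw [← hval]; exact hcb
          _ = (1/16:ℝ)^n * (L:ℝ)^2 := by ring
      · have hFval : F L n = 0 := if_neg hmem0
        rw [hFval, norm_zero]
        positivity
  exact hconv.congr fun L => (hsum_eq L).symm
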